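/- arXiv:1104.3046 — 5 statements merged into one kernel-verified Lean document; each statement's English description precedes it below -/
import Mathlib

section
/- Let X be an n×n real (or complex) matrix with spectral norm ‖X‖₂ < 1. Then for any fixed m ≥ 2, det(I + X) = exp( Σ_{r=1}^{m-1} ((-1)^{r+1}/r) tr(X^r) + E_m(X) ), where |E_m(X)| ≤ (n/m) · ‖X‖₂^m / (1 - ‖X‖₂). -/
/-!
By Jacobi's formula and the Neumann series for `(1 + tX)⁻¹`, the logarithmic derivative of
`t ↦ det (1 + tX)` is `∑ₖ (-t)ᵏ tr (Xᵏ⁺¹)`, which is also the derivative of the power series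
`∑ᵣ (-1)ʳ⁺¹ tʳ tr (Xʳ) / r`. Hence `det (1 + tX) · exp (-∑ᵣ …)` is constant on `[0, 1]`, and
`det (1 + X) = exp (∑ᵣ (-1)ʳ⁺¹ tr (Xʳ) / r)`. Since every entry, hence every diagonal entry, of a
matrix is bounded by its spectral norm, `|tr (Xʳ)| ≤ n ‖X‖ʳ`, so the tail of the series from
`r = m` is dominated by the geometric series `(n / m) ∑_{r ≥ m} ‖X‖ʳ`.
-/

open scoped Matrix.Norms.L2Operator

open Set in
theorem eq_mul_exp_sub_of_hasDerivAt {f g g' : ℝ → ℝ} {a b : ℝ} (hab : a ≤ b)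
    (hf : ∀ t ∈ Icc a b, HasDerivAt f (f t * g' t) t)
    (hg : ∀ t ∈ Icc a b, HasDerivAt g (g' t) t) :
    f b = f a * Real.exp (g b - g a) := by
  set F := fun t => f t * Real.exp (-g t)
  have hF : ∀ t ∈ Icc a b, HasDerivAt F 0 t := fun t ht =>
    ((hf t ht).mul (hg t ht).neg.exp).congr_deriv (by ring)
  have hconst := constant_of_has_deriv_right_zero
    (fun t ht => (hF t ht).continuousAt.continuousWithinAt)
    (fun t ht => (hF t (Ico_subset_Icc_self ht)).hasDerivWithinAt) b ⟨hab, le_rfl⟩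
  calc f b = F b * Real.exp (g b) := by simp [F, mul_assoc, ← Real.exp_add]
    _ = f a * Real.exp (g b - g a) := by
      rw [hconst, mul_assoc, ← Real.exp_add, neg_add_eq_sub]

theorem hasDerivAt_tsum_div_succ_mul_pow {a : ℕ → ℝ} {C q t : ℝ} (hq : 0 ≤ q)
    (ha : ∀ k, |a k| ≤ C * q ^ k) (ht : |t| * q < 1) :
    HasDerivAt (fun y => ∑' k : ℕ, a k / (k + 1) * y ^ (k + 1)) (∑' k : ℕ, a k * t ^ k) t := by
  obtain ⟨ρ, htρ, hρq⟩ : ∃ ρ, |t| < ρ ∧ ρ * q < 1 :=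
    (((continuous_id.mul continuous_const).tendsto |t|).eventually (gt_mem_nhds ht)).exists_gt
  have hρ : 0 ≤ ρ * q := mul_nonneg ((abs_nonneg t).trans htρ.le) hq
  refine hasDerivAt_tsum_of_isPreconnected (u := fun k => C * (ρ * q) ^ k)
    (g' := fun k y => a k * y ^ k) ((summable_geometric_of_lt_one hρ hρq).mul_left C)
    Metric.isOpen_ball (convex_ball 0 ρ).isPreconnected (fun k y _ => ?_) (fun k y hy => ?_)
    (Metric.mem_ball_self ((abs_nonneg t).trans_lt htρ)) (by simp) (by simpa using htρ)
  · refine ((hasDerivAt_pow (k + 1) y).const_mul (a k / (k + 1))).congr_deriv ?_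
    rw [Nat.add_sub_cancel, Nat.cast_succ]
    field_simp
  · rw [mem_ball_zero_iff, Real.norm_eq_abs] at hy
    rw [Real.norm_eq_abs, abs_mul, abs_pow, mul_pow, ← mul_assoc, mul_right_comm]
    exact mul_le_mul (ha k) (pow_le_pow_left₀ (abs_nonneg y) hy.le k) (by positivity)
      ((abs_nonneg _).trans (ha k))

namespace Matrix

variable {ι κ 𝕜 : Type*} [Fintype ι]

theorem norm_apply_le_l2_opNorm [RCLike 𝕜] [Fintype κ] [DecidableEq κ] (A : Matrix ι κ 𝕜)
    (i : ι) (j : κ) : ‖A i j‖ ≤ ‖A‖ := by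
  have h := A.l2_opNorm_mulVec (EuclideanSpace.single j 1)
  rw [PiLp.norm_single, norm_one, mul_one] at h
  refine le_trans (le_of_eq ?_) ((PiLp.norm_apply_le _ i).trans h)
  simp [mulVec_single]

variable [DecidableEq ι]

open Polynomial in
theorem eval_det_one_add_X_smul [CommRing 𝕜] (M : Matrix ι ι 𝕜) (r : 𝕜) :
    (det (1 + (X : 𝕜[X]) • M.map C)).eval r = det (1 + r • M) := by
  simp [eval_det, ← smul_eq_mul_diagonal]

section NontriviallyNormedField

variable [NontriviallyNormedField 𝕜]

open Polynomial in
theorem hasDerivAt_det_one_add_smul_zero (M : Matrix ι ι 𝕜) :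
    HasDerivAt (fun s : 𝕜 => (1 + s • M).det) M.trace 0 := by
  have h := (det (1 + (X : 𝕜[X]) • M.map C)).hasDerivAt 0
  rw [derivative_det_one_add_X_smul] at h
  simpa only [eval_det_one_add_X_smul] using h

theorem hasDerivAt_det_one_add_smul {X B : Matrix ι ι 𝕜} {t : 𝕜} (hB : (1 + t • X) * B = 1) :
    HasDerivAt (fun s : 𝕜 => (1 + s • X).det) ((1 + t • X).det * (B * X).trace) t := by
  have hfactor : (fun s : 𝕜 => (1 + s • X).det) =
      fun s => (1 + t • X).det * (1 + (s - t) • (B * X)).det := funext fun s => by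
    rw [← det_mul, mul_add, mul_one, mul_smul_comm, ← mul_assoc, hB, one_mul, add_assoc,
      ← add_smul, add_sub_cancel]
  have h := HasDerivAt.comp_sub_const t t
    (by simpa using hasDerivAt_det_one_add_smul_zero (B * X))
  exact hfactor ▸ h.const_mul _

end NontriviallyNormedField

section RCLike

variable [RCLike 𝕜]

theorem norm_trace_le_l2_opNorm (A : Matrix ι ι 𝕜) : ‖A.trace‖ ≤ Fintype.card ι * ‖A‖ :=
  calc ‖A.trace‖ ≤ ∑ i, ‖A i i‖ := norm_sum_le _ _
    _ ≤ ∑ _i : ι, ‖A‖ := Finset.sum_le_sum fun i _ => A.norm_apply_le_l2_opNorm i i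
    _ = Fintype.card ι * ‖A‖ := by simp

theorem norm_trace_pow_le_l2_opNorm (A : Matrix ι ι 𝕜) {r : ℕ} (hr : r ≠ 0) :
    ‖(A ^ r).trace‖ ≤ Fintype.card ι * ‖A‖ ^ r :=
  (A ^ r).norm_trace_le_l2_opNorm.trans <| by
    gcongr; exact norm_pow_le' A (Nat.pos_of_ne_zero hr)

theorem hasSum_neg_pow_mul_trace_pow_succ (X : Matrix ι ι 𝕜) {t : 𝕜} (ht : ‖t • X‖ < 1) :
    HasSum (fun k : ℕ => (-t) ^ k * (X ^ (k + 1)).trace)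
      ((∑' k : ℕ, (-(t • X)) ^ k) * X).trace := by
  have h := ((summable_geometric_of_norm_lt_one (norm_neg (t • X) ▸ ht)).hasSum.mul_right X).map
    (traceAddMonoidHom ι 𝕜) continuous_id.matrix_trace
  refine h.congr_fun fun k => ?_
  change _ = ((-(t • X)) ^ k * X).trace
  rw [← neg_smul, smul_pow, smul_mul_assoc, trace_smul, smul_eq_mul, pow_succ]

theorem hasDerivAt_det_one_add_smul_of_norm_lt (X : Matrix ι ι 𝕜) {t : 𝕜} (ht : ‖t • X‖ < 1) :
    HasDerivAt (fun s : 𝕜 => (1 + s • X).det)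
      ((1 + t • X).det * ∑' k : ℕ, (-t) ^ k * (X ^ (k + 1)).trace) t := by
  have hinv : (1 + t • X) * ∑' k : ℕ, (-(t • X)) ^ k = 1 := by
    simpa using mul_neg_geom_series (-(t • X)) (by rwa [norm_neg])
  rw [(X.hasSum_neg_pow_mul_trace_pow_succ ht).tsum_eq]
  exact hasDerivAt_det_one_add_smul hinv

/-- The division by `r` makes the `r = 0` term vanish. -/
noncomputable def logDetTerm (X : Matrix ι ι 𝕜) (r : ℕ) : 𝕜 :=
  (-1) ^ (r + 1) / r * (X ^ r).trace

theorem logDetTerm_zero (X : Matrix ι ι 𝕜) : X.logDetTerm 0 = 0 := by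
  simp [logDetTerm]

theorem logDetTerm_succ (X : Matrix ι ι 𝕜) (k : ℕ) :
    X.logDetTerm (k + 1) = (-1) ^ k * (X ^ (k + 1)).trace / (k + 1) := by
  rw [logDetTerm, pow_succ, pow_succ]
  push_cast
  ring

theorem norm_logDetTerm_add_le (X : Matrix ι ι 𝕜) {m : ℕ} (hm : m ≠ 0) (i : ℕ) :
    ‖X.logDetTerm (i + m)‖ ≤ Fintype.card ι / m * ‖X‖ ^ m * ‖X‖ ^ i := by
  have hr : i + m ≠ 0 := by omega
  calc ‖X.logDetTerm (i + m)‖ = ‖(X ^ (i + m)).trace‖ / (i + m : ℕ) := by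
        rw [logDetTerm, norm_mul, norm_div, norm_pow, norm_neg, norm_one, one_pow,
          RCLike.norm_natCast, one_div_mul_eq_div]
    _ ≤ Fintype.card ι * ‖X‖ ^ (i + m) / m := by
        gcongr
        · exact X.norm_trace_pow_le_l2_opNorm hr
        · exact_mod_cast Nat.le_add_left m i
    _ = Fintype.card ι / m * ‖X‖ ^ m * ‖X‖ ^ i := by ring

theorem summable_logDetTerm (X : Matrix ι ι 𝕜) (hX : ‖X‖ < 1) : Summable X.logDetTerm :=
  (summable_nat_add_iff 1).1 <| .of_norm_bounded
    ((summable_geometric_of_lt_one (norm_nonneg X) hX).mul_left _)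
    (X.norm_logDetTerm_add_le one_ne_zero)

end RCLike

theorem det_one_add_eq_exp_tsum_logDetTerm (X : Matrix ι ι ℝ) (hX : ‖X‖ < 1) :
    (1 + X).det = Real.exp (∑' r, X.logDetTerm r) := by
  set a : ℕ → ℝ := fun k => (-1) ^ k * (X ^ (k + 1)).trace
  have ha : ∀ k, |a k| ≤ Fintype.card ι * ‖X‖ * ‖X‖ ^ k := fun k => by
    simpa [a, pow_succ', mul_assoc] using X.norm_trace_pow_le_l2_opNorm k.succ_ne_zero
  have htX : ∀ t ∈ Set.Icc (0 : ℝ) 1, |t| * ‖X‖ < 1 := fun t ht =>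
    (mul_le_of_le_one_left (norm_nonneg X) (by rw [abs_of_nonneg ht.1]; exact ht.2)).trans_lt hX
  have hode := eq_mul_exp_sub_of_hasDerivAt (f := fun s => (1 + s • X).det)
    (g := fun y => ∑' k : ℕ, a k / (k + 1) * y ^ (k + 1)) (g' := fun t => ∑' k : ℕ, a k * t ^ k)
    zero_le_one (fun t ht => ?_)
    (fun t ht => hasDerivAt_tsum_div_succ_mul_pow (norm_nonneg X) ha (htX t ht))
  · simp only [one_smul, zero_smul, add_zero, det_one, one_mul, one_pow, mul_one, ne_eq,
      add_eq_zero, one_ne_zero, and_false, not_false_eq_true, zero_pow, mul_zero, tsum_zero,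
      sub_zero] at hode
    rw [hode, (X.summable_logDetTerm hX).tsum_eq_zero_add, logDetTerm_zero, zero_add]
    simp only [a, logDetTerm_succ]
  · refine (X.hasDerivAt_det_one_add_smul_of_norm_lt (t := t)
      (by rw [norm_smul]; exact htX t ht)).congr_deriv ?_
    simp only [a, neg_pow t, mul_right_comm]

end Matrix

/-- If `‖X‖₂ < 1` then for fixed `m ≥ 2`,
`det(I + X) = exp(∑_{r=1}^{m-1} ((-1)^{r+1}/r) tr(X^r) + E_m)` with
`|E_m| ≤ (n/m)·‖X‖₂^m/(1-‖X‖₂)`. -/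
theorem stmt_3 (n m : ℕ) (hm : 2 ≤ m) (X : Matrix (Fin n) (Fin n) ℝ)
    (hX : ‖X‖ < 1) :
    ∃ E : ℝ, |E| ≤ (n / m) * ‖X‖ ^ m / (1 - ‖X‖) ∧
      (1 + X).det =
        Real.exp ((∑ r ∈ Finset.Ico 1 m, (-1) ^ (r + 1) / r * (X ^ r).trace) + E) := by
  have htail := X.norm_logDetTerm_add_le (m := m) (by omega)
  simp only [Fintype.card_fin] at htail
  refine ⟨∑' i, X.logDetTerm (i + m), ?_, ?_⟩
  · calc |∑' i, X.logDetTerm (i + m)| ≤ n / m * ‖X‖ ^ m * (1 - ‖X‖)⁻¹ :=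
          tsum_of_norm_bounded ((hasSum_geometric_of_lt_one (norm_nonneg X) hX).mul_left _) htail
      _ = n / m * ‖X‖ ^ m / (1 - ‖X‖) := by rw [div_eq_mul_inv _ (1 - ‖X‖)]
  · rw [Matrix.det_one_add_eq_exp_tsum_logDetTerm X hX,
      ← (X.summable_logDetTerm hX).sum_add_tsum_nat_add m, Finset.range_eq_Ico,
      Finset.sum_eq_sum_Ico_succ_bot (by omega), Matrix.logDetTerm_zero, zero_add]
    rfl
end

section
/- Let X be an n×n matrix with spectral norm ‖X‖₂ < 1 all of whose eigenvalues are non-negative real numbers. Then det(I - X) ≥ exp( - tr(X) / (1 - ‖X‖₂) ). -/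
open scoped Matrix.Norms.L2Operator

/-!
The hypothesis on the complex spectrum makes the characteristic polynomial of `X` split over `ℝ`,
with roots `λᵢ ∈ [0, ‖X‖₂]`. Hence `det (1 - X) = ∏ (1 - λᵢ)` and `tr X = ∑ λᵢ`, and the bound
follows factor by factor from `log (1 - λ) ≥ -λ / (1 - λ) ≥ -λ / (1 - ‖X‖₂)`.
-/

open Polynomial

namespace Real

theorem exp_neg_div_one_sub_le_one_sub {t s : ℝ} (ht : 0 ≤ t) (hts : t ≤ s) (hs : s < 1) :
    exp (-t / (1 - s)) ≤ 1 - t := by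
  have hpos : 0 < 1 - t := by linarith
  calc exp (-t / (1 - s)) ≤ exp (-t / (1 - t)) := by
        gcongr exp ?_
        rw [neg_div, neg_div, neg_le_neg_iff]
        exact div_le_div_of_nonneg_left ht (by linarith) (by linarith)
    _ = exp (1 - (1 - t)⁻¹) := by congr 1; field_simp; ring
    _ ≤ exp (log (1 - t)) := exp_le_exp.2 (one_sub_inv_le_log_of_pos hpos)
    _ = 1 - t := exp_log hpos

theorem exp_neg_multiset_sum_div_le_prod_one_sub {s : ℝ} (hs : s < 1) (S : Multiset ℝ)
    (hS : ∀ t ∈ S, 0 ≤ t ∧ t ≤ s) :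
    exp (-S.sum / (1 - s)) ≤ (S.map (1 - ·)).prod := by
  have hsum : -S.sum / (1 - s) = (S.map fun t => -t / (1 - s)).sum := by
    rw [Multiset.sum_map_div, Multiset.sum_map_neg']
  rw [hsum, exp_multiset_sum, Multiset.map_map]
  exact Multiset.prod_map_le_prod_map₀ _ _ (fun _ _ => (exp_pos _).le)
    fun t ht => exp_neg_div_one_sub_le_one_sub (hS t ht).1 (hS t ht).2 hs

end Real

namespace Matrix

variable {n : Type*} [Fintype n] [DecidableEq n]

theorem det_one_sub_eq_prod_roots_charpoly_of_splits {R : Type*} [CommRing R] [IsDomain R]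
    {A : Matrix n n R} (hA : A.charpoly.Splits) :
    (1 - A).det = (A.charpoly.roots.map (1 - ·)).prod := by
  rw [← hA.eval_eq_prod_roots_of_monic A.charpoly_monic, eval_charpoly, map_one]

theorem map_mem_spectrum_map_iff {K L : Type*} [Field K] [Field L] (f : K →+* L)
    (A : Matrix n n K) (r : K) : f r ∈ spectrum L (A.map f) ↔ r ∈ spectrum K A := by
  rw [mem_spectrum_iff_isRoot_charpoly, mem_spectrum_iff_isRoot_charpoly, charpoly_map,
    IsRoot, eval_map_apply, map_eq_zero_iff f f.injective, IsRoot]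

theorem charpoly_splits_of_spectrum_map_subset_range {K L : Type*} [Field K] [Field L]
    (f : K →+* L) (A : Matrix n n K) (hL : (A.map f).charpoly.Splits)
    (hA : ∀ μ ∈ spectrum L (A.map f), μ ∈ f.range) : A.charpoly.Splits := by
  rw [charpoly_map] at hL
  refine Splits.of_splits_map_of_injective f.injective hL fun μ hμ => hA μ ?_
  rw [mem_spectrum_iff_isRoot_charpoly, charpoly_map]
  exact isRoot_of_mem_roots hμ

-- The empty matrix algebra has `‖1‖ = 0`, so `NormOneClass` needs a nonempty index type.
theorem norm_le_l2OpNorm_of_mem_spectrum {𝕜 : Type*} [RCLike 𝕜] {A : Matrix n n 𝕜} {r : 𝕜}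
    (hr : r ∈ spectrum 𝕜 A) : ‖r‖ ≤ ‖A‖ := by
  have : Nonempty n := (isEmpty_or_nonempty n).resolve_left fun _ => by
    simp [spectrum.of_subsingleton] at hr
  exact spectrum.norm_le_norm_of_mem hr

end Matrix

/-- If `‖X‖₂ < 1` and all eigenvalues of `X` are non-negative reals, then
`det(I - X) ≥ exp(-tr X / (1 - ‖X‖₂))`. -/
theorem stmt_4 (n : ℕ) (X : Matrix (Fin n) (Fin n) ℝ) (hX : ‖X‖ < 1)
    (heig : ∀ μ : ℂ, μ ∈ spectrum ℂ (X.map (Complex.ofReal)) →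
      ∃ t : ℝ, 0 ≤ t ∧ μ = (t : ℂ)) :
    Real.exp (-X.trace / (1 - ‖X‖)) ≤ (1 - X).det := by
  have hsplit : X.charpoly.Splits :=
    X.charpoly_splits_of_spectrum_map_subset_range Complex.ofRealHom (IsAlgClosed.splits _)
      fun μ hμ => by obtain ⟨t, -, rfl⟩ := heig μ hμ; exact ⟨t, rfl⟩
  have hroots : ∀ t ∈ X.charpoly.roots, 0 ≤ t ∧ t ≤ ‖X‖ := by
    intro t ht
    have hspec : t ∈ spectrum ℝ X :=
      Matrix.mem_spectrum_iff_isRoot_charpoly.2 (isRoot_of_mem_roots ht)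
    obtain ⟨t', ht', htt'⟩ :=
      heig t ((X.map_mem_spectrum_map_iff Complex.ofRealHom t).2 hspec)
    exact ⟨Complex.ofReal_injective htt' ▸ ht',
      (le_abs_self t).trans (Matrix.norm_le_l2OpNorm_of_mem_spectrum hspec)⟩
  rw [Matrix.trace_eq_sum_roots_charpoly_of_splits hsplit,
    Matrix.det_one_sub_eq_prod_roots_charpoly_of_splits hsplit]
  exact Real.exp_neg_multiset_sum_div_le_prod_one_sub hX _ hroots
end

section
/- |cos x| ≤ exp(-x²/2) for all real x with |x| ≤ 9π/16. -/
/-!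
On `[0, π/2]` write `cos x = 1 - 2 sin² (x/2)` and bound `sin (x/2)` below by its cubic Taylor
polynomial; the resulting polynomial is below `(1 - x²/8)⁴ ≤ exp (-x²/2)`. On `[π/2, 9π/16]`
the cosine is negative and `|cos x| = sin (x - π/2) ≤ π/16`, which is still below the Gaussian at
the endpoint `9π/16`.
-/

open Real

lemma cos_le_one_sub_sq_div_eight_pow_four {x : ℝ} (hx₀ : 0 ≤ x) (hx : x ≤ 2) :
    cos x ≤ (1 - x ^ 2 / 8) ^ 4 := by
  set s := x / 2 with hs
  have hs₀ : 0 ≤ s := by positivity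
  have hs₁ : s ≤ 1 := by linarith
  have hcos : cos x = 1 - 2 * sin s ^ 2 := by
    rw [← cos_two_mul_eq_one_sub, hs]; ring_nf
  have htaylor : 0 ≤ s - s ^ 3 / 6 := by nlinarith [mul_nonneg hs₀ (sq_nonneg s)]
  have hsin : (s - s ^ 3 / 6) ^ 2 ≤ sin s ^ 2 := pow_le_pow_left₀ htaylor (sin_ge_sub_cube hs₀) 2
  have hx' : x = 2 * s := by rw [hs]; ring
  rw [hcos, hx']
  -- the difference of the two polynomials is `s⁴ (5/6 - 4 s²/9 + s⁴/16)`
  nlinarith [pow_nonneg hs₀ 4, mul_nonneg (pow_nonneg hs₀ 4) (sub_nonneg.2 (pow_le_one₀ hs₀ hs₁ (n := 2)))]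

lemma cos_le_exp_neg_sq_div_two {x : ℝ} (hx₀ : 0 ≤ x) (hx : x ≤ 2) :
    cos x ≤ exp (-x ^ 2 / 2) := by
  have hexp : (1 - x ^ 2 / 2 / (4 : ℕ)) ^ 4 ≤ exp (-(x ^ 2 / 2)) :=
    one_sub_div_pow_le_exp_neg (by push_cast; nlinarith)
  calc cos x ≤ (1 - x ^ 2 / 8) ^ 4 := cos_le_one_sub_sq_div_eight_pow_four hx₀ hx
    _ = (1 - x ^ 2 / 2 / (4 : ℕ)) ^ 4 := by push_cast; ring
    _ ≤ exp (-x ^ 2 / 2) := by rwa [neg_div]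

lemma pi_div_sixteen_le_exp : π / 16 ≤ exp (-(9 * π / 16) ^ 2 / 2) := by
  have hπ := pi_lt_d4
  have hbase : (0.9512 : ℝ) ≤ 1 - (9 * π / 16) ^ 2 / 2 / (32 : ℕ) := by
    push_cast; nlinarith [pi_pos]
  calc π / 16 ≤ (0.9512 : ℝ) ^ 32 := by norm_num; linarith
    _ ≤ (1 - (9 * π / 16) ^ 2 / 2 / (32 : ℕ)) ^ 32 := pow_le_pow_left₀ (by norm_num) hbase 32
    _ ≤ exp (-((9 * π / 16) ^ 2 / 2)) := one_sub_div_pow_le_exp_neg (by push_cast; nlinarith)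
    _ = exp (-(9 * π / 16) ^ 2 / 2) := by rw [neg_div]

lemma neg_cos_le_exp_neg_sq_div_two {x : ℝ} (hx₀ : π / 2 ≤ x) (hx : x ≤ 9 * π / 16) :
    -cos x ≤ exp (-x ^ 2 / 2) := by
  calc -cos x = sin (x - π / 2) := (sin_sub_pi_div_two x).symm
    _ ≤ x - π / 2 := sin_le (by linarith)
    _ ≤ π / 16 := by linarith
    _ ≤ exp (-(9 * π / 16) ^ 2 / 2) := pi_div_sixteen_le_exp
    _ ≤ exp (-x ^ 2 / 2) := by
      gcongr
      linarith [pi_pos]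

/-- `|cos x| ≤ exp (-x²/2)` for all real `x` with `|x| ≤ 9π/16`. -/
theorem stmt_12 (x : ℝ) (hx : |x| ≤ 9 * Real.pi / 16) :
    |Real.cos x| ≤ Real.exp (-x ^ 2 / 2) := by
  rw [← cos_abs, ← sq_abs]
  have hx₀ := abs_nonneg x
  rcases le_total |x| (π / 2) with h | h
  · rw [abs_of_nonneg (cos_nonneg_of_neg_pi_div_two_le_of_le (by linarith [pi_pos]) h)]
    exact cos_le_exp_neg_sq_div_two hx₀ (by linarith [pi_lt_four])
  · rw [abs_of_nonpos (cos_nonpos_of_pi_div_two_le_of_le h (by linarith [pi_pos]))]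
    exact neg_cos_le_exp_neg_sq_div_two h hx
end

section
/- Let G be a simple graph on n vertices with algebraic connectivity λ₁ ≥ σn (σ > 0), and let A ⊆ V(G) with |A| ≥ an and |A| ≤ n - σn/4 for some a > 0. Then the number of vertices w ∉ A having at least αn neighbors in A is at least αn, where α = aσ³/32. -/
/-!
Test the spectral bound on the centred indicator `x = 1_{Aᶜ} - (|Aᶜ|/n)·1`, which sums to zero.
Since `L 1 = 0`, the shift does not change the quadratic form, so `xᵀ L x = e(A, Aᶜ)`, while
`n‖x‖² = |A||Aᶜ|`; hence `e(A, Aᶜ) ≥ σ|A||Aᶜ| ≥ aσ²n²/4`. On the other hand a vertex outside `A`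
sends at most `n` edges into `A`, and fewer than `αn` unless it is one of the `b` vertices counted,
so `e(A, Aᶜ) ≤ bn + αn²`, which forces `b ≥ αn`.
-/

open Matrix Finset

theorem Finset.sum_le_mul_card_filter_add_mul_card {ι R : Type*} [Semiring R] [LinearOrder R]
    [IsOrderedRing R] (s : Finset ι) (f : ι → R) {M t : R} (hM : ∀ i ∈ s, f i ≤ M)
    (ht : 0 ≤ t) : ∑ i ∈ s, f i ≤ #{i ∈ s | t ≤ f i} * M + #s * t := by
  rw [← sum_filter_add_sum_filter_not s (t ≤ f ·)]
  gcongr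
  · rw [← nsmul_eq_mul]
    exact sum_le_card_nsmul _ _ _ fun i hi ↦ hM i (mem_filter.1 hi).1
  · calc ∑ i ∈ s with ¬t ≤ f i, f i ≤ #{i ∈ s | ¬t ≤ f i} * t := by
          rw [← nsmul_eq_mul]
          exact sum_le_card_nsmul _ _ _ fun i hi ↦ (not_le.1 (mem_filter.1 hi).2).le
      _ ≤ #s * t := by gcongr; exact filter_subset _ _

section CenteredIndicator

variable (R : Type*) [Field R] {V : Type*} [Fintype V] [DecidableEq V]

def centeredIndicator (s : Finset V) : V → R :=
  (fun v ↦ if v ∈ s then 1 else 0) - fun _ ↦ (#s : R) / Fintype.card V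

variable [CharZero R] [Nonempty V]

theorem sum_centeredIndicator (s : Finset V) : ∑ v, centeredIndicator R s v = 0 := by
  have hV : (Fintype.card V : R) ≠ 0 := by simp
  simp [centeredIndicator, sum_sub_distrib, mul_div_cancel₀ _ hV]

theorem card_mul_centeredIndicator_dotProduct_self (s : Finset V) :
    Fintype.card V * (centeredIndicator R s ⬝ᵥ centeredIndicator R s) = #s * #sᶜ := by
  set c : R := #s / Fintype.card V with hc
  have hsq : ∀ v, centeredIndicator R s v * centeredIndicator R s v =
      (1 - 2 * c) * (if v ∈ s then 1 else 0) + c ^ 2 := by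
    intro v
    split_ifs <;> simp [centeredIndicator, *] <;> ring
  have hV : (Fintype.card V : R) ≠ 0 := by simp
  simp only [dotProduct, hsq, sum_add_distrib, ← mul_sum, sum_boole, filter_mem_eq_inter,
    univ_inter, sum_const, card_univ, nsmul_eq_mul, card_compl, Nat.cast_sub (card_le_univ s), hc]
  field_simp
  ring

end CenteredIndicator

namespace SimpleGraph

variable {V : Type*} [Fintype V] [DecidableEq V] (G : SimpleGraph V) [DecidableRel G.Adj]

theorem dotProduct_lapMatrix_mulVec_sub_const {R : Type*} [CommRing R] (x : V → R) (c : R) :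
    (x - fun _ ↦ c) ⬝ᵥ G.lapMatrix R *ᵥ (x - fun _ ↦ c) = x ⬝ᵥ G.lapMatrix R *ᵥ x := by
  have hconst : G.lapMatrix R *ᵥ (fun _ ↦ c) = 0 := by
    have : (fun _ : V ↦ c) = c • fun _ ↦ (1 : R) := by ext; simp
    rw [this, mulVec_smul, lapMatrix_mulVec_const_eq_zero, smul_zero]
  have hsymm : (fun _ ↦ c) ⬝ᵥ G.lapMatrix R *ᵥ x = 0 := by
    rw [dotProduct_mulVec, ← (G.isSymm_lapMatrix R).eq, vecMul_transpose, hconst, zero_dotProduct]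
  simp [mulVec_sub, hconst, sub_dotProduct, hsymm]

theorem indicator_dotProduct_lapMatrix_mulVec_indicator {R : Type*} [CommRing R] (s : Finset V) :
    (fun v ↦ if v ∈ s then (1 : R) else 0) ⬝ᵥ
        G.lapMatrix R *ᵥ (fun v ↦ if v ∈ s then (1 : R) else 0) =
      ∑ v ∈ s, (#{u ∈ sᶜ | G.Adj v u} : R) := by
  have hdeg : ∀ v, #(G.neighborFinset v ∩ s) + #{u ∈ sᶜ | G.Adj v u} = G.degree v := by
    intro v
    rw [← card_neighborFinset_eq_degree, ← card_inter_add_card_sdiff (G.neighborFinset v) s]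
    congr 2
    ext u
    simp [and_comm]
  simp only [dotProduct, lapMatrix_mulVec_apply, ite_mul, one_mul, zero_mul, sum_ite_mem,
    univ_inter, sum_const, nsmul_one]
  refine sum_congr rfl fun v hv ↦ ?_
  rw [if_pos hv, ← hdeg, Nat.cast_add]
  ring

theorem centeredIndicator_dotProduct_lapMatrix_mulVec {R : Type*} [Field R] [CharZero R]
    (s : Finset V) :
    centeredIndicator R s ⬝ᵥ G.lapMatrix R *ᵥ centeredIndicator R s =
      ∑ v ∈ s, (#{u ∈ sᶜ | G.Adj v u} : R) := by
  rw [centeredIndicator, dotProduct_lapMatrix_mulVec_sub_const,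
    indicator_dotProduct_lapMatrix_mulVec_indicator]

variable [Nonempty V] {R : Type*} [Field R] [LinearOrder R] [IsStrictOrderedRing R]

theorem mul_card_mul_card_compl_le_card_mul_sum_card_adj {μ : R}
    (hμ : ∀ x : V → R, ∑ v, x v = 0 → μ * (x ⬝ᵥ x) ≤ x ⬝ᵥ G.lapMatrix R *ᵥ x) (s : Finset V) :
    μ * #s * #sᶜ ≤ Fintype.card V * ∑ v ∈ s, (#{u ∈ sᶜ | G.Adj v u} : R) := by
  have h := hμ _ (sum_centeredIndicator R s)
  rw [G.centeredIndicator_dotProduct_lapMatrix_mulVec] at h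
  calc μ * #s * #sᶜ = Fintype.card V * (μ * (centeredIndicator R s ⬝ᵥ centeredIndicator R s)) := by
        rw [mul_left_comm, card_mul_centeredIndicator_dotProduct_self, mul_assoc]
    _ ≤ _ := by gcongr

end SimpleGraph

/-- Expansion property: if `λ₁(G) ≥ σn` and `A ⊆ V(G)` with `an ≤ |A| ≤ n - σn/4`,
then at least `αn` vertices outside `A` have at least `αn` neighbours in `A`,
where `α = aσ³/32`. -/
theorem stmt_17 (σ a : ℝ) (hσ : 0 < σ) (ha : 0 < a) (n : ℕ)
    (G : SimpleGraph (Fin n)) [DecidableRel G.Adj] (A : Finset (Fin n))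
    (hcon : ∀ x : Fin n → ℝ, (∑ i, x i) = 0 →
      σ * n * (x ⬝ᵥ x) ≤ x ⬝ᵥ (G.lapMatrix ℝ).mulVec x)
    (hA1 : a * n ≤ (A.card : ℝ)) (hA2 : (A.card : ℝ) ≤ n - σ * n / 4) :
    a * σ ^ 3 / 32 * n ≤
      ((Finset.univ.filter fun w => w ∉ A ∧
          a * σ ^ 3 / 32 * n ≤ ((A.filter fun u => G.Adj w u).card : ℝ)).card : ℝ) := by
  rcases Nat.eq_zero_or_pos n with rfl | hn
  · simp
  have : Nonempty (Fin n) := ⟨⟨0, hn⟩⟩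
  have hN : (0 : ℝ) < n := by exact_mod_cast hn
  set α := a * σ ^ 3 / 32 with hα
  have hcut : σ * #Aᶜ * #A ≤ ∑ w ∈ Aᶜ, (#{u ∈ A | G.Adj w u} : ℝ) := by
    have h := G.mul_card_mul_card_compl_le_card_mul_sum_card_adj hcon Aᶜ
    rw [compl_compl, Fintype.card_fin] at h
    exact le_of_mul_le_mul_left (by linarith) hN
  have hmarkov := sum_le_mul_card_filter_add_mul_card Aᶜ
    (fun w ↦ (#{u ∈ A | G.Adj w u} : ℝ)) (M := n)
    (fun w _ ↦ by simpa using (card_filter_le A (G.Adj w)).trans A.card_le_univ)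
    (by positivity : 0 ≤ α * n)
  rw [show {w ∈ Aᶜ | α * n ≤ (#{u ∈ A | G.Adj w u} : ℝ)} =
      univ.filter fun w ↦ w ∉ A ∧ α * n ≤ (#{u ∈ A | G.Adj w u} : ℝ) by ext; simp] at hmarkov
  have hAc : (#Aᶜ : ℝ) = n - #A := by
    rw [card_compl, Fintype.card_fin, Nat.cast_sub (by simpa using A.card_le_univ)]
  have hσ4 : σ ≤ 4 := by nlinarith
  have hlow : σ * (σ * n / 4) * (a * n) ≤ σ * #Aᶜ * #A := by gcongr; linarith
  have hrest : (#Aᶜ : ℝ) * (α * n) ≤ n * (α * n) := by gcongr; simpa using Aᶜ.card_le_univ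
  have hgap : 0 ≤ a * σ ^ 2 * (4 - σ) * (n * n) := by
    have : 0 ≤ 4 - σ := by linarith
    positivity
  -- `σ ≤ 4` gives `2α ≤ aσ²/4`: the cut bound `aσ²n²/4` exceeds the error term `αn²` by at least `αn²`.
  refine le_of_mul_le_mul_right ?_ hN
  nlinarith
end

section
/- Let G be a simple graph with n vertices and suppose its Laplacian Q satisfies λ₁ ≥ σn for σ > 0. Let M₁₁ be the principal minor of Q̂ = Q + J obtained by deleting the first row and column. Then there is a constant c₁ > 0 depending only on σ such that det M₁₁ ≤ c₁ · det(Q̂)/n for all sufficiently large n. -/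
/-!
Write `Q̂ = Q + J`. It maps `1` to `(n+1) • 1` and agrees with `Q` on `1ᗮ`, where the spectral
gap gives `xᵀ Q x ≥ σ (n+1) |x|²`; hence `xᵀ Q̂ x ≥ min σ 1 · (n+1) |x|²` for every `x`.
For a coercive symmetric matrix `A` with constant `μ`, the vector `w = A⁻¹ e₁` satisfies
`μ w₁² ≤ wᵀ A w = w₁`, so `(A⁻¹)₁₁ ≤ 1/μ`; and `det M₁₁ = det A · (A⁻¹)₁₁` by Cramer's rule.
-/

open Matrix

namespace Matrix

variable {ι : Type*} [Fintype ι] {A : Matrix ι ι ℝ} {μ : ℝ}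

theorem det_ne_zero_of_coercive [DecidableEq ι] (hμ : 0 < μ)
    (hA : ∀ x, μ * (x ⬝ᵥ x) ≤ x ⬝ᵥ A *ᵥ x) : A.det ≠ 0 := by
  intro hdet
  obtain ⟨x, hx, hAx⟩ := exists_mulVec_eq_zero_iff.mpr hdet
  have hxx : 0 < x ⬝ᵥ x := dotProduct_self_star_pos_iff.mpr hx
  have := hA x
  rw [hAx, dotProduct_zero] at this
  nlinarith

theorem posDef_of_coercive (hAh : A.IsHermitian) (hμ : 0 < μ)
    (hA : ∀ x, μ * (x ⬝ᵥ x) ≤ x ⬝ᵥ A *ᵥ x) : A.PosDef :=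
  PosDef.of_dotProduct_mulVec_pos hAh fun x hx =>
    (mul_pos hμ (dotProduct_self_star_pos_iff.mpr hx)).trans_le (hA x)

theorem inv_apply_self_le_of_coercive [DecidableEq ι] (hμ : 0 < μ)
    (hA : ∀ x, μ * (x ⬝ᵥ x) ≤ x ⬝ᵥ A *ᵥ x) (i : ι) : A⁻¹ i i ≤ μ⁻¹ := by
  set w := A⁻¹ *ᵥ Pi.single i 1
  have hAw : A *ᵥ w = Pi.single i 1 := by
    rw [mulVec_mulVec, mul_nonsing_inv _ (det_ne_zero_of_coercive hμ hA).isUnit, one_mulVec]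
  have hwi : w i = A⁻¹ i i := by simp [w, mulVec_single]
  have hquad : μ * w i ^ 2 ≤ w i :=
    calc μ * w i ^ 2 ≤ μ * (w ⬝ᵥ w) := by
          gcongr
          simpa [dotProduct, sq] using
            Finset.single_le_sum (f := fun j => w j * w j) (fun j _ => mul_self_nonneg _)
              (Finset.mem_univ i)
      _ ≤ w ⬝ᵥ A *ᵥ w := hA w
      _ = w i := by rw [hAw, dotProduct_single, mul_one]
  rw [← hwi, ← one_div, le_div_iff₀ hμ]
  rcases le_or_gt (w i) 0 with hneg | hpos <;> nlinarith

theorem dotProduct_of_one_mulVec_self {R : Type*} [CommSemiring R] (x : ι → R) :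
    x ⬝ᵥ (of fun _ _ => (1 : R) : Matrix ι ι R) *ᵥ x = (∑ i, x i) ^ 2 := by
  simp [mulVec, dotProduct, ← Finset.sum_mul, sq]

theorem det_submatrix_succAbove_eq_det_mul_inv_apply {K : Type*} [Field K] {n : ℕ}
    {A : Matrix (Fin (n + 1)) (Fin (n + 1)) K} (hA : A.det ≠ 0) (i : Fin (n + 1)) :
    (A.submatrix i.succAbove i.succAbove).det = A.det * A⁻¹ i i := by
  rw [inv_def, smul_apply, adjugate_fin_succ_eq_det_submatrix, ← two_mul, pow_mul, neg_one_sq,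
    one_pow, one_mul, Ring.inverse_eq_inv', smul_eq_mul, mul_inv_cancel_left₀ hA]

theorem det_submatrix_succAbove_le_of_coercive {n : ℕ}
    {A : Matrix (Fin (n + 1)) (Fin (n + 1)) ℝ}
    (hAh : A.IsHermitian) (hμ : 0 < μ) (hA : ∀ x, μ * (x ⬝ᵥ x) ≤ x ⬝ᵥ A *ᵥ x)
    (i : Fin (n + 1)) : (A.submatrix i.succAbove i.succAbove).det ≤ A.det / μ := by
  rw [det_submatrix_succAbove_eq_det_mul_inv_apply (det_ne_zero_of_coercive hμ hA),
    div_eq_mul_inv]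
  exact mul_le_mul_of_nonneg_left (inv_apply_self_le_of_coercive hμ hA i)
    (posDef_of_coercive hAh hμ hA).det_pos.le

end Matrix

namespace SimpleGraph

variable {V : Type*} [Fintype V] [DecidableEq V] (G : SimpleGraph V) [DecidableRel G.Adj]

theorem lapMatrix_dotProduct_add_const {R : Type*} [Field R] [CharZero R] (x : V → R) (c : R) :
    (x + fun _ => c) ⬝ᵥ G.lapMatrix R *ᵥ (x + fun _ => c) = x ⬝ᵥ G.lapMatrix R *ᵥ x := by
  simp only [← toLinearMap₂'_apply', lapMatrix_toLinearMap₂', Pi.add_apply,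
    add_sub_add_right_eq_sub]

theorem min_mul_dotProduct_le_lapMatrix_add_ones [Nonempty V] {κ : ℝ}
    (hκ : ∀ y : V → ℝ, ∑ i, y i = 0 → κ * (y ⬝ᵥ y) ≤ y ⬝ᵥ G.lapMatrix ℝ *ᵥ y) (x : V → ℝ) :
    min κ (Fintype.card V) * (x ⬝ᵥ x) ≤
      x ⬝ᵥ (G.lapMatrix ℝ + of fun _ _ => (1 : ℝ)) *ᵥ x := by
  set m : ℝ := (Fintype.card V : ℝ)
  have hm : 0 < m := by positivity
  -- Split `x = y + s • 1` with `y ⊥ 1`.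
  set s := (∑ i, x i) / m
  set y : V → ℝ := x - fun _ => s
  have hsum : ∑ i, x i = m * s := (mul_div_cancel₀ _ hm.ne').symm
  have hy : ∑ i, y i = 0 := by
    simp [y, Finset.sum_sub_distrib, hsum, m]
  have hxy : x = y + fun _ => s := (sub_add_cancel x _).symm
  have hnorm : x ⬝ᵥ x = y ⬝ᵥ y + m * s ^ 2 := by
    rw [hxy]
    simp only [dotProduct, Pi.add_apply, add_mul, mul_add, Finset.sum_add_distrib, ← Finset.mul_sum,
      ← Finset.sum_mul, hy, Finset.sum_const, Finset.card_univ, nsmul_eq_mul]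
    ring
  have hquad : x ⬝ᵥ (G.lapMatrix ℝ + of fun _ _ => (1 : ℝ)) *ᵥ x =
      y ⬝ᵥ G.lapMatrix ℝ *ᵥ y + m * (m * s ^ 2) := by
    rw [add_mulVec, dotProduct_add, dotProduct_of_one_mulVec_self, hsum, hxy,
      lapMatrix_dotProduct_add_const]
    ring
  have hyy : 0 ≤ y ⬝ᵥ y := dotProduct_self_star_nonneg y
  rw [hnorm, hquad]
  nlinarith [hκ y hy, min_le_left κ m, min_le_right κ m, mul_nonneg hm.le (sq_nonneg s)]

end SimpleGraph

/-- If `λ₁(G) ≥ σ·|V|` then, for all sufficiently large `n`, the principal minor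
`M₁₁` of `Q̂ = Q + J` obtained by deleting the first row and column satisfies
`det M₁₁ ≤ c₁ · det Q̂ / |V|` for a constant `c₁ > 0` depending only on `σ`. -/
theorem stmt_18 (σ : ℝ) (hσ : 0 < σ) :
    ∃ c : ℝ, 0 < c ∧ ∃ N : ℕ, ∀ n, N ≤ n →
      ∀ (G : SimpleGraph (Fin (n + 1))) (_ : DecidableRel G.Adj),
        (∀ x : Fin (n + 1) → ℝ, (∑ i, x i) = 0 →
          σ * (n + 1) * (x ⬝ᵥ x) ≤ x ⬝ᵥ (G.lapMatrix ℝ).mulVec x) →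
        ((G.lapMatrix ℝ + (Matrix.of fun _ _ => (1 : ℝ) : Matrix (Fin (n + 1)) (Fin (n + 1)) ℝ)).submatrix
            Fin.succ Fin.succ).det ≤
          c * (G.lapMatrix ℝ + (Matrix.of fun _ _ => (1 : ℝ) : Matrix (Fin (n + 1)) (Fin (n + 1)) ℝ)).det / (n + 1) := by
  refine ⟨(min σ 1)⁻¹, by positivity, 0, fun n _ G _ hgap => ?_⟩
  have hμ : 0 < min σ 1 * (n + 1) := by positivity
  have hcoer := G.min_mul_dotProduct_le_lapMatrix_add_ones hgap
  have hmin : min (σ * (n + 1)) (Fintype.card (Fin (n + 1)) : ℝ) = min σ 1 * (n + 1) := by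
    rw [min_mul_of_nonneg _ _ (by positivity), Fintype.card_fin, Nat.cast_add_one, one_mul]
  rw [hmin] at hcoer
  have hherm : (G.lapMatrix ℝ + of fun _ _ => (1 : ℝ)).IsHermitian :=
    (G.isHermitian_lapMatrix ℝ).add (by ext; simp)
  calc _ ≤ _ / (min σ 1 * (n + 1)) := by
        simpa only [Fin.succAbove_zero] using
          det_submatrix_succAbove_le_of_coercive hherm hμ hcoer 0
    _ = _ := by field_simp
end
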